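/- arXiv:2307.06137 — 2 statements merged into one kernel-verified Lean document; each statement's English description precedes it below -/
import Mathlib

section
/- Let Σ* be a symmetric positive definite d×d real matrix, Σ a symmetric positive semidefinite d×d real matrix, m, m* ∈ ℝ^d, and set a = m − S(Σ*,Σ)m* and V = S(Σ*,Σ) − I_d. Then ‖a + Vm*‖² + tr(VΣ*V) = ‖m − m*‖² + tr(Σ) + tr(Σ*) − 2 tr((Σ*^{1/2} Σ Σ*^{1/2})^{1/2}). In particular, ‖φ_{μ*}(N(m,Σ))‖²_{(m*,Σ*)} equals the squared Wasserstein distance formula ‖m − m*‖² + tr(Σ + Σ* − 2(Σ*^{1/2}ΣΣ*^{1/2})^{1/2}). -/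
open MeasureTheory Matrix Filter ProbabilityTheory

open Classical in
/-- The unique symmetric positive semidefinite square root of a positive semidefinite real
matrix (junk value `0` if the matrix is not positive semidefinite). -/
noncomputable def matSqrt {d : ℕ} (A : Matrix (Fin d) (Fin d) ℝ) : Matrix (Fin d) (Fin d) ℝ :=
  if h : A.PosSemidef then
    h.1.eigenvectorUnitary * diagonal (Real.sqrt ∘ h.1.eigenvalues) *
      (star h.1.eigenvectorUnitary : Matrix (Fin d) (Fin d) ℝ)
  else 0

/-- `S(Σ₁, Σ₂) = Σ₁^{-1/2} (Σ₁^{1/2} Σ₂ Σ₁^{1/2})^{1/2} Σ₁^{-1/2}`. -/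
noncomputable def Smat {d : ℕ} (S1 S2 : Matrix (Fin d) (Fin d) ℝ) : Matrix (Fin d) (Fin d) ℝ :=
  (matSqrt S1)⁻¹ * matSqrt (matSqrt S1 * S2 * matSqrt S1) * (matSqrt S1)⁻¹

open Classical in
/-- The Gaussian measure `N(m, Σ)` on `ℝ^d`, realized as the pushforward of a product of
standard real Gaussians under `x ↦ m + Σ^{1/2} x` (junk value `0` if `Σ` is not psd). -/
noncomputable def gaussianMeasure {d : ℕ} (m : Fin d → ℝ) (S : Matrix (Fin d) (Fin d) ℝ) :
    Measure (Fin d → ℝ) :=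
  if _h : S.PosSemidef then
    (Measure.pi fun _ : Fin d => gaussianReal 0 1).map (fun x => m + (matSqrt S).mulVec x)
  else 0

/-- Squared euclidean distance on `ℝ^d`. -/
def sqDist {d : ℕ} (x y : Fin d → ℝ) : ℝ := ∑ i, (x i - y i) ^ 2

/-- The 2-Wasserstein distance between two measures on `ℝ^d` (with the euclidean cost). -/
noncomputable def W2 {d : ℕ} (μ ν : Measure (Fin d → ℝ)) : ℝ :=
  Real.sqrt (⨅ π ∈ {π : Measure ((Fin d → ℝ) × (Fin d → ℝ)) |
      IsProbabilityMeasure π ∧ π.map Prod.fst = μ ∧ π.map Prod.snd = ν},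
    ∫⁻ p, ENNReal.ofReal (sqDist p.1 p.2) ∂π).toReal

/-- The inner product `⟨(a,V),(b,U)⟩_{(m*,Σ*)}` on `Ξ_d`. -/
noncomputable def xiInner {d : ℕ} (ms : Fin d → ℝ) (Ss : Matrix (Fin d) (Fin d) ℝ)
    (a : Fin d → ℝ) (V : Matrix (Fin d) (Fin d) ℝ)
    (b : Fin d → ℝ) (U : Matrix (Fin d) (Fin d) ℝ) : ℝ :=
  (a + V.mulVec ms) ⬝ᵥ (b + U.mulVec ms) + (V * Ss * U).trace

/-- The squared norm `‖(a,V)‖²_{(m*,Σ*)} = ‖a + V m*‖² + tr(V Σ* V)` on `Ξ_d`. -/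
noncomputable def xiNormSq {d : ℕ} (ms : Fin d → ℝ) (Ss : Matrix (Fin d) (Fin d) ℝ)
    (a : Fin d → ℝ) (V : Matrix (Fin d) (Fin d) ℝ) : ℝ :=
  (∑ i, (a i + V.mulVec ms i) ^ 2) + (V * Ss * V).trace

/-- The norm `‖(a,V)‖_{(m*,Σ*)}` on `Ξ_d`. -/
noncomputable def xiNorm {d : ℕ} (ms : Fin d → ℝ) (Ss : Matrix (Fin d) (Fin d) ℝ)
    (a : Fin d → ℝ) (V : Matrix (Fin d) (Fin d) ℝ) : ℝ :=
  Real.sqrt (xiNormSq ms Ss a V)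

section MatSqrt

variable {d : ℕ} {A : Matrix (Fin d) (Fin d) ℝ}

theorem matSqrt_mul_self (hA : A.PosSemidef) : matSqrt A * matSqrt A = A := by
  set U : Matrix (Fin d) (Fin d) ℝ := (hA.1.eigenvectorUnitary : Matrix (Fin d) (Fin d) ℝ)
  set D := diagonal (Real.sqrt ∘ hA.1.eigenvalues)
  have hUU : star U * U = 1 := by simp [U]
  have hDD : D * D = diagonal hA.1.eigenvalues := by
    rw [diagonal_mul_diagonal]
    exact congrArg diagonal (funext fun i => Real.mul_self_sqrt (hA.eigenvalues_nonneg i))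
  calc matSqrt A * matSqrt A = U * D * (star U * U) * D * star U := by
        simp only [matSqrt, dif_pos hA, Matrix.mul_assoc, U, D]
    _ = U * diagonal hA.1.eigenvalues * star U := by
        rw [hUU, Matrix.mul_one, Matrix.mul_assoc U D D, hDD]
    _ = A := by
        conv_rhs => rw [hA.1.spectral_theorem]
        simp [Unitary.conjStarAlgAut_apply, U]

theorem matSqrt_conjTranspose (hA : A.PosSemidef) : (matSqrt A)ᴴ = matSqrt A := by
  rw [matSqrt, dif_pos hA, conjTranspose_mul, conjTranspose_mul, ← star_eq_conjTranspose,
    star_star, diagonal_conjTranspose, ← star_eq_conjTranspose, Matrix.mul_assoc]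
  congr 2

theorem isUnit_det_matSqrt (hA : A.PosDef) : IsUnit (matSqrt A).det := by
  have hsq : (matSqrt A).det * (matSqrt A).det = A.det := by
    rw [← det_mul, matSqrt_mul_self hA.posSemidef]
  refine isUnit_iff_ne_zero.2 fun h0 => hA.det_pos.ne' ?_
  rw [← hsq, h0, zero_mul]

theorem Matrix.PosSemidef.matSqrt_mul_mul_matSqrt {B : Matrix (Fin d) (Fin d) ℝ}
    (hB : B.PosSemidef) (hA : A.PosSemidef) : (matSqrt A * B * matSqrt A).PosSemidef := by
  simpa only [matSqrt_conjTranspose hA] using hB.mul_mul_conjTranspose_same (matSqrt A)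

end MatSqrt

/-- With `A = Σ*^{1/2}` and `T = A⁻¹ M A⁻¹`, conjugating by `A` turns `T A² T` into a conjugate
of `S` and `T A²` into a conjugate of `M`. -/
theorem Matrix.trace_sub_one_mul_mul_sub_one_of_mul_self_eq {n R : Type*} [Fintype n]
    [DecidableEq n] [CommRing R] {A M S : Matrix n n R} (hA : IsUnit A.det)
    (hM : M * M = A * S * A) :
    ((A⁻¹ * M * A⁻¹ - 1) * (A * A) * (A⁻¹ * M * A⁻¹ - 1)).trace
      = S.trace + (A * A).trace - 2 * M.trace := by
  have hinv : A⁻¹ * A = 1 := nonsing_inv_mul A hA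
  have hinv' : A * A⁻¹ = 1 := mul_nonsing_inv A hA
  have hquad : (A⁻¹ * M * A⁻¹) * (A * A) * (A⁻¹ * M * A⁻¹) = A⁻¹ * A * S * (A * A⁻¹) := by
    calc _ = A⁻¹ * M * (A⁻¹ * A) * (A * A⁻¹) * M * A⁻¹ := by noncomm_ring
      _ = A⁻¹ * (M * M) * A⁻¹ := by rw [hinv, hinv']; noncomm_ring
      _ = _ := by rw [hM]; noncomm_ring
  have hlin : ((A⁻¹ * M * A⁻¹) * (A * A)).trace = M.trace := by
    calc _ = (A⁻¹ * (M * A)).trace := by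
          simp only [Matrix.mul_assoc]; rw [← Matrix.mul_assoc A⁻¹ A, hinv, Matrix.one_mul]
      _ = (M * A * A⁻¹).trace := trace_mul_comm _ _
      _ = M.trace := by rw [Matrix.mul_assoc, hinv', Matrix.mul_one]
  have hlin' : ((A * A) * (A⁻¹ * M * A⁻¹)).trace = M.trace := by rw [trace_mul_comm, hlin]
  rw [show ∀ T : Matrix n n R, (T - 1) * (A * A) * (T - 1)
      = T * (A * A) * T - T * (A * A) - (A * A) * T + A * A from fun T => by noncomm_ring]
  rw [trace_add, trace_sub, trace_sub, hquad, hinv, hinv', Matrix.one_mul, Matrix.mul_one, hlin,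
    hlin']
  ring

/-- With `a = m − S(Σ*,Σ)m*` and `V = S(Σ*,Σ) − I`, one has
`‖a + Vm*‖² + tr(VΣ*V) = ‖m − m*‖² + tr(Σ) + tr(Σ*) − 2 tr((Σ*^{1/2} Σ Σ*^{1/2})^{1/2})`;
i.e. `‖φ_{μ*}(N(m,Σ))‖²_{(m*,Σ*)}` equals the squared Wasserstein distance formula. -/
theorem stmt_2 {d : ℕ} (m ms : Fin d → ℝ) (S Ss : Matrix (Fin d) (Fin d) ℝ)
    (hSs : Ss.PosDef) (hS : S.PosSemidef) :
    xiNormSq ms Ss (m - (Smat Ss S).mulVec ms) (Smat Ss S - 1)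
      = (∑ i, (m i - ms i) ^ 2) + S.trace + Ss.trace
        - 2 * (matSqrt (matSqrt Ss * S * matSqrt Ss)).trace := by
  have hmean (i : Fin d) :
      (m - (Smat Ss S).mulVec ms) i + (Smat Ss S - 1).mulVec ms i = m i - ms i := by
    simp [sub_mulVec]
  have hcov := trace_sub_one_mul_mul_sub_one_of_mul_self_eq (isUnit_det_matSqrt hSs)
    (matSqrt_mul_self (hS.matSqrt_mul_mul_matSqrt hSs.posSemidef))
  rw [matSqrt_mul_self hSs.posSemidef] at hcov
  rw [xiNormSq, Finset.sum_congr rfl fun i _ => by rw [hmean i], Smat, hcov]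
  ring
end

section
/- Let d1, d2, K ≥ 1 and let 𝔸 = Σ_{k=1}^K a1^{(k)} ∘ a2^{(k)} ∘ a3^{(k)} ∘ a4^{(k)} ∈ ℝ^{d1×(d1+1)×d2×(d2+1)} be a rank-K tensor with a1^{(k)} ∈ ℝ^{d1}, a2^{(k)} ∈ ℝ^{d1+1}, a3^{(k)} ∈ ℝ^{d2}, a4^{(k)} ∈ ℝ^{d2+1}. Define b^{(k)} ∈ ℝ^{d2+1} with first entry a4^{(k)}[1] and all other entries zero, c^{(k)} = (a4^{(k)}[2], …, a4^{(k)}[d2+1]) ∈ ℝ^{d2}, and d^{(k)} = (0, a3^{(k)}[1], …, a3^{(k)}[d2]) ∈ ℝ^{d2+1}. Then 𝔸* = Σ_{k=1}^K a1^{(k)} ∘ a2^{(k)} ∘ a3^{(k)} ∘ b^{(k)} + Σ_{k=1}^K a1^{(k)} ∘ a2^{(k)} ∘ c^{(k)} ∘ d^{(k)}, and consequently (𝔸 + 𝔸*)/2 = Σ_{k=1}^K a1^{(k)} ∘ a2^{(k)} ∘ a3^{(k)} ∘ ((a4^{(k)}+b^{(k)})/2) + Σ_{k=1}^K a1^{(k)}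 ∘ a2^{(k)} ∘ c^{(k)} ∘ (d^{(k)}/2), i.e., (𝔸+𝔸*)/2 admits a rank-2K decomposition. -/
/-- The star operation `C ↦ C*` on `d₂ × (d₂+1)` matrices: `C*[r,1] = C[r,1]` and
`C*[r,s] = C[s−1,r+1]` for `s ≥ 2` (1-based indices). -/
def mstar {d2 : ℕ} (C : Fin d2 → Fin (d2 + 1) → ℝ) : Fin d2 → Fin (d2 + 1) → ℝ :=
  fun r s => Fin.cases (C r 0) (fun r' => C r' r.succ) s

/-- The star operation on tensors, acting as `C ↦ C*` on each `d₂ × (d₂+1)` slice. -/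
def tstar {d1 d2 : ℕ} (T : Fin d1 → Fin (d1 + 1) → Fin d2 → Fin (d2 + 1) → ℝ) :
    Fin d1 → Fin (d1 + 1) → Fin d2 → Fin (d2 + 1) → ℝ :=
  fun p q => mstar (T p q)

/-- The outer product of four vectors, `(a1∘a2∘a3∘a4)[p,q,r,s] = a1[p]a2[q]a3[r]a4[s]`. -/
def outer {d1 d2 : ℕ} (a1 : Fin d1 → ℝ) (a2 : Fin (d1 + 1) → ℝ) (a3 : Fin d2 → ℝ)
    (a4 : Fin (d2 + 1) → ℝ) : Fin d1 → Fin (d1 + 1) → Fin d2 → Fin (d2 + 1) → ℝ :=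
  fun p q r s => a1 p * a2 q * a3 r * a4 s

/-- For a rank-`K` tensor `𝔸 = ∑ₖ a₁⁽ᵏ⁾∘a₂⁽ᵏ⁾∘a₃⁽ᵏ⁾∘a₄⁽ᵏ⁾`, with
`b⁽ᵏ⁾ = (a₄⁽ᵏ⁾[1],0,…,0)`, `c⁽ᵏ⁾ = (a₄⁽ᵏ⁾[2],…,a₄⁽ᵏ⁾[d₂+1])` and
`d⁽ᵏ⁾ = (0,a₃⁽ᵏ⁾[1],…,a₃⁽ᵏ⁾[d₂])`, one has
`𝔸* = ∑ₖ a₁⁽ᵏ⁾∘a₂⁽ᵏ⁾∘a₃⁽ᵏ⁾∘b⁽ᵏ⁾ + ∑ₖ a₁⁽ᵏ⁾∘a₂⁽ᵏ⁾∘c⁽ᵏ⁾∘d⁽ᵏ⁾`, and consequently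
`(𝔸+𝔸*)/2 = ∑ₖ a₁⁽ᵏ⁾∘a₂⁽ᵏ⁾∘a₃⁽ᵏ⁾∘((a₄⁽ᵏ⁾+b⁽ᵏ⁾)/2) + ∑ₖ a₁⁽ᵏ⁾∘a₂⁽ᵏ⁾∘c⁽ᵏ⁾∘(d⁽ᵏ⁾/2)`,
a rank-`2K` decomposition. -/
theorem stmt_14 {d1 d2 K : ℕ} (hK : 1 ≤ K)
    (a1 : Fin K → Fin d1 → ℝ) (a2 : Fin K → Fin (d1 + 1) → ℝ)
    (a3 : Fin K → Fin d2 → ℝ) (a4 : Fin K → Fin (d2 + 1) → ℝ) :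
    (tstar (fun p q r s => ∑ k, outer (a1 k) (a2 k) (a3 k) (a4 k) p q r s)
      = fun p q r s =>
          (∑ k, outer (a1 k) (a2 k) (a3 k)
            (fun t => Fin.cases (a4 k 0) (fun _ => 0) t) p q r s)
        + (∑ k, outer (a1 k) (a2 k) (fun r' => a4 k r'.succ)
            (fun t => Fin.cases 0 (fun r' => a3 k r') t) p q r s)) ∧
    ((fun p q r s =>
        ((∑ k, outer (a1 k) (a2 k) (a3 k) (a4 k) p q r s)
          + tstar (fun p q r s => ∑ k, outer (a1 k) (a2 k) (a3 k) (a4 k) p q r s) p q r s) / 2)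
      = fun p q r s =>
          (∑ k, outer (a1 k) (a2 k) (a3 k)
            (fun t => (a4 k t + Fin.cases (a4 k 0) (fun _ => 0) t) / 2) p q r s)
        + (∑ k, outer (a1 k) (a2 k) (fun r' => a4 k r'.succ)
            (fun t => (Fin.cases 0 (fun r' => a3 k r') t : ℝ) / 2) p q r s)) := by
  have key : ∀ p q r s, tstar (fun p q r s => ∑ k, outer (a1 k) (a2 k) (a3 k) (a4 k) p q r s) p q r s
      = (∑ k, outer (a1 k) (a2 k) (a3 k)
          (fun t => Fin.cases (a4 k 0) (fun _ => 0) t) p q r s)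
        + (∑ k, outer (a1 k) (a2 k) (fun r' => a4 k r'.succ)
          (fun t => Fin.cases 0 (fun r' => a3 k r') t) p q r s) := by
    intro p q r s
    induction s using Fin.cases with
    | zero => simp [tstar, mstar, outer, Finset.sum_add_distrib]
    | succ s' =>
      simp only [tstar, mstar, outer, Fin.cases_succ, Fin.cases_zero,
        ← Finset.sum_add_distrib]
      apply Finset.sum_congr rfl
      intro k _
      ring
  constructor
  · funext p q r s
    exact key p q r s
  · funext p q r s
    rw [key p q r s]
    simp only [outer]
    rw [← Finset.sum_add_distrib, ← Finset.sum_add_distrib, Finset.sum_div, ← Finset.sum_add_distrib]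
    apply Finset.sum_congr rfl
    intro k _
    ring
end
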